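/- arXiv:0806.0365 — 2 statements merged into one kernel-verified Lean document; each statement's English description precedes it below -/
import Mathlib

section
/- For every λ ≥ 0 and h ≥ 0, the limit F(λ,h) = lim_{N→∞} (1/N) 𝔼 log Z_{N,ω}(λ,h) exists (as a consequence of superadditivity of the sequence N ↦ 𝔼 log Z_{N,ω}(λ,h)), and F(λ,h) ≥ 0. -/
/-!
Concatenating a trajectory to `m` with a trajectory from `m` to `m + n` gives
`Z_{m+n}(ω) ≥ Z_m(ω) Z_n(θ^m ω)`, and the i.i.d. disorder is invariant under the shift `θ^m`,
so `N ↦ 𝔼 log Z_N` is superadditive. Each excursion weight is at most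
`exp (∑ 2|λ|(|h| + |ω_i|))` and `∑ K ≤ 1`, so `𝔼 log Z_N ≤ C N` and Fekete's lemma gives the
limit. The single excursion from `0` to `N` gives `Z_N ≥ K(N)/2`, and the power-law tail makes
`log K(N) = o(N)`, so the limit is nonnegative.

`K` may vanish at small `N`, where `Z_N = 0` and `log 0 = 0`: superadditivity, and hence
Fekete's lemma, is only used beyond the point from which `K > 0`.
-/

open MeasureTheory ProbabilityTheory Filter Finset

/-- The Boltzmann weight `(1 + exp(-2λh(b-a) - 2λ Σ_{i=a+1}^b ω_i))/2`
of a single copolymer excursion from `a` to `b`. -/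
noncomputable def cw (lam h : ℝ) (ω : ℕ → ℝ) (a b : ℕ) : ℝ :=
  (1 + Real.exp (-(2 * lam * h * ((b : ℝ) - (a : ℝ)))
      - 2 * lam * ∑ i ∈ Finset.Icc (a + 1) b, ω i)) / 2

/-- The copolymer partition function `Z_{N,ω}(λ,h)`: summing over the position `j`
of the last renewal point before `N` reproduces the sum over all renewal
configurations `0 = t_0 < t_1 < ⋯ < t_m = N` of `∏_r K(t_r - t_{r-1}) ·
(1+exp(-2λh(t_r-t_{r-1}) - 2λ Σ ω_i))/2`. -/
noncomputable def Zpart (K : ℕ → ℝ) (lam h : ℝ) (ω : ℕ → ℝ) : ℕ → ℝ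
  | 0 => 1
  | N + 1 => ∑ j ∈ (Finset.range (N + 1)).attach,
      Zpart K lam h ω j.1 * K (N + 1 - j.1) * cw lam h ω j.1 (N + 1)
  decreasing_by exact Finset.mem_range.mp j.2

/-- `P` is the joint law of an IID sequence of standard Gaussian random variables:
a probability measure on `ℕ → ℝ` under which the coordinates are independent,
each with law `gaussianReal 0 1`. -/
def IsGaussianDisorder (P : Measure (ℕ → ℝ)) : Prop :=
  IsProbabilityMeasure P ∧
    iIndepFun (fun i ω => ω i) P ∧
    ∀ i : ℕ, P.map (fun ω => ω i) = gaussianReal 0 1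

open Topology

section Fekete

variable {a : ℕ → ℝ} {n₀ : ℕ}

theorem le_apply_mul_add_of_superadditive
    (hsuper : ∀ m n, n₀ ≤ m → n₀ ≤ n → a m + a n ≤ a (m + n)) {m : ℕ} (hm : n₀ ≤ m)
    (k : ℕ) {r : ℕ} (hr : n₀ ≤ r) : k * a m + a r ≤ a (k * m + r) := by
  induction k with
  | zero => simp
  | succ k ih =>
    calc ((k + 1 : ℕ) : ℝ) * a m + a r = a m + (k * a m + a r) := by push_cast; ring
      _ ≤ a m + a (k * m + r) := by gcongr
      _ ≤ a (m + (k * m + r)) := hsuper _ _ hm (hr.trans (Nat.le_add_left _ _))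
      _ = a ((k + 1) * m + r) := by congr 1; ring

theorem tendsto_div_sSup_of_superadditive (hn₀ : 0 < n₀)
    (hsuper : ∀ m n, n₀ ≤ m → n₀ ≤ n → a m + a n ≤ a (m + n))
    (hbdd : BddAbove ((fun n => a n / n) '' Set.Ici n₀)) :
    Tendsto (fun n => a n / n) atTop (𝓝 (sSup ((fun n => a n / n) '' Set.Ici n₀))) := by
  refine (tendsto_add_atTop_iff_nat n₀).1 (tendsto_order.2 ⟨fun l hl => ?_, fun l hl => ?_⟩)
  · obtain ⟨_, ⟨m, hm, rfl⟩, hlm⟩ := exists_lt_of_lt_csSup ((Set.nonempty_Ici).image _) hl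
    have hm : n₀ ≤ m := hm
    refine .atTop_of_arithmetic (by omega : m ≠ 0) fun r _ => ?_
    have hconv : Tendsto (fun x : ℝ => (x * a m + a (r + n₀)) / (x * m + (r + n₀ : ℕ)))
        atTop (𝓝 (a m / m)) := by
      have hconv' : Tendsto (fun x : ℝ => (a m + a (r + n₀) / x) / (m + (r + n₀ : ℕ) / x)) atTop
          (𝓝 ((a m + 0) / (m + 0))) :=
        (tendsto_const_nhds.add <| tendsto_const_nhds.div_atTop tendsto_id).div
          (tendsto_const_nhds.add <| tendsto_const_nhds.div_atTop tendsto_id)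
          (by simp; omega)
      rw [add_zero, add_zero] at hconv'
      refine hconv'.congr' <| (eventually_ne_atTop 0).mono fun x hx => ?_
      simp only [add_div' _ _ _ hx, div_div_div_cancel_right₀ hx, mul_comm]
    refine ((hconv.comp tendsto_natCast_atTop_atTop).eventually (lt_mem_nhds hlm)).mono
      fun k hk => hk.trans_le ?_
    have hpos : (0 : ℝ) < (k * m + (r + n₀) : ℕ) := by positivity
    have := le_apply_mul_add_of_superadditive hsuper hm k (Nat.le_add_left n₀ r)
    simp only [Function.comp_apply]
    rw [show m * k + r + n₀ = k * m + (r + n₀) by ring]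
    push_cast at hpos ⊢
    gcongr
  · exact Eventually.of_forall fun n =>
      (le_csSup hbdd ⟨n + n₀, Nat.le_add_left _ _, rfl⟩).trans_lt hl

end Fekete

section PartitionFunction

noncomputable def energyBound (lam h x : ℝ) : ℝ := 2 * |lam| * (|h| + |x|)

variable {K : ℕ → ℝ} {lam h : ℝ} {ω : ℕ → ℝ}

theorem cw_nonneg (lam h : ℝ) (ω : ℕ → ℝ) (a b : ℕ) : 0 ≤ cw lam h ω a b := by
  unfold cw; positivity

theorem one_half_le_cw (lam h : ℝ) (ω : ℕ → ℝ) (a b : ℕ) : 1 / 2 ≤ cw lam h ω a b := by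
  unfold cw
  linarith [Real.exp_pos (-(2 * lam * h * ((b : ℝ) - a)) - 2 * lam * ∑ i ∈ Icc (a + 1) b, ω i)]

theorem cw_le_exp_sum_energyBound {a b : ℕ} (hab : a ≤ b) :
    cw lam h ω a b ≤ Real.exp (∑ i ∈ Icc (a + 1) b, energyBound lam h (ω i)) := by
  set t := -(2 * lam * h * ((b : ℝ) - a)) - 2 * lam * ∑ i ∈ Icc (a + 1) b, ω i
  have ht : t = ∑ i ∈ Icc (a + 1) b, -(2 * lam * (h + ω i)) := by
    simp only [t, sum_neg_distrib, mul_add, sum_add_distrib, sum_const, Nat.card_Icc,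
      nsmul_eq_mul, ← mul_sum]
    rw [Nat.cast_sub (by omega)]
    push_cast
    ring
  have habs : |t| ≤ ∑ i ∈ Icc (a + 1) b, energyBound lam h (ω i) :=
    ht ▸ (abs_sum_le_sum_abs _ _).trans (sum_le_sum fun i _ => by
      rw [energyBound, abs_neg, abs_mul, abs_mul, abs_two]
      gcongr
      exact abs_add_le _ _)
  calc cw lam h ω a b = (1 + Real.exp t) / 2 := rfl
    _ ≤ Real.exp |t| := by
      linarith [Real.one_le_exp (abs_nonneg t), Real.exp_le_exp.2 (le_abs_self t)]
    _ ≤ _ := Real.exp_le_exp.2 habs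

theorem Zpart_zero (K : ℕ → ℝ) (lam h : ℝ) (ω : ℕ → ℝ) : Zpart K lam h ω 0 = 1 := by
  rw [Zpart]

theorem Zpart_succ (K : ℕ → ℝ) (lam h : ℝ) (ω : ℕ → ℝ) (N : ℕ) :
    Zpart K lam h ω (N + 1) =
      ∑ j ∈ range (N + 1), Zpart K lam h ω j * K (N + 1 - j) * cw lam h ω j (N + 1) := by
  rw [Zpart]
  exact sum_attach (range (N + 1)) fun j => Zpart K lam h ω j * K (N + 1 - j) * cw lam h ω j (N + 1)

theorem Zpart_nonneg (hKnn : ∀ n, 0 ≤ K n) (N : ℕ) : 0 ≤ Zpart K lam h ω N := by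
  induction N using Nat.strong_induction_on with
  | _ N ih =>
    rcases N with _ | N
    · simp [Zpart_zero]
    · rw [Zpart_succ]
      exact sum_nonneg fun j hj =>
        mul_nonneg (mul_nonneg (ih j (mem_range.1 hj)) (hKnn _)) (cw_nonneg _ _ _ _ _)

theorem Zpart_mul_mul_cw_nonneg (hKnn : ∀ n, 0 ≤ K n) (j b : ℕ) :
    0 ≤ Zpart K lam h ω j * K (b - j) * cw lam h ω j b :=
  mul_nonneg (mul_nonneg (Zpart_nonneg hKnn j) (hKnn _)) (cw_nonneg _ _ _ _ _)

theorem half_le_Zpart (hKnn : ∀ n, 0 ≤ K n) {N : ℕ} (hN : N ≠ 0) :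
    K N / 2 ≤ Zpart K lam h ω N := by
  obtain ⟨N, rfl⟩ := Nat.exists_eq_succ_of_ne_zero hN
  rw [Zpart_succ]
  refine le_trans ?_ (single_le_sum (fun j _ => Zpart_mul_mul_cw_nonneg hKnn j (N + 1))
    (mem_range.2 N.succ_pos))
  rw [Zpart_zero, one_mul, Nat.sub_zero]
  nlinarith [one_half_le_cw lam h ω 0 (N + 1), hKnn (N + 1)]

theorem Zpart_pos (hKnn : ∀ n, 0 ≤ K n) {N : ℕ} (hN : N ≠ 0) (hKN : 0 < K N) :
    0 < Zpart K lam h ω N :=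
  (half_pos hKN).trans_le (half_le_Zpart hKnn hN)

theorem Zpart_le_exp_sum_energyBound (hKnn : ∀ n, 0 ≤ K n) (hKsum : HasSum K 1) (N : ℕ) :
    Zpart K lam h ω N ≤ Real.exp (∑ i ∈ Icc 1 N, energyBound lam h (ω i)) := by
  set S : ℕ → ℕ → ℝ := fun a b => ∑ i ∈ Icc (a + 1) b, energyBound lam h (ω i)
  induction N using Nat.strong_induction_on with
  | _ N ih =>
    rcases N with _ | N
    · simp [Zpart_zero]
    have hsplit : ∀ j ≤ N + 1, S 0 j + S j (N + 1) = S 0 (N + 1) := fun j hj => by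
      simp only [S, Icc_add_one_left_eq_Ioc]
      exact sum_Ioc_consecutive _ (Nat.zero_le j) hj
    have hK : ∑ j ∈ range (N + 1), K (N + 1 - j) ≤ 1 :=
      calc ∑ j ∈ range (N + 1), K (N + 1 - j) = ∑ j ∈ range (N + 1), K (j + 1) := by
            rw [← sum_range_reflect]
            exact sum_congr rfl fun j hj => congrArg K (by have := mem_range.1 hj; omega)
        _ ≤ ∑ n ∈ range (N + 2), K n := by rw [sum_range_succ' K]; linarith [hKnn 0]
        _ ≤ 1 := sum_le_hasSum _ (fun n _ => hKnn n) hKsum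
    rw [Zpart_succ]
    calc ∑ j ∈ range (N + 1), Zpart K lam h ω j * K (N + 1 - j) * cw lam h ω j (N + 1)
        ≤ ∑ j ∈ range (N + 1), Real.exp (S 0 j) * K (N + 1 - j) * Real.exp (S j (N + 1)) :=
          sum_le_sum fun j hj => by
            have hj := mem_range.1 hj
            have := hKnn (N + 1 - j)
            gcongr
            exacts [cw_nonneg _ _ _ _ _, ih j hj, cw_le_exp_sum_energyBound hj.le]
      _ = Real.exp (S 0 (N + 1)) * ∑ j ∈ range (N + 1), K (N + 1 - j) := by
          rw [mul_sum]
          refine sum_congr rfl fun j hj => ?_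
          rw [← hsplit j (mem_range.1 hj).le, Real.exp_add]
          ring
      _ ≤ Real.exp (S 0 (N + 1)) := mul_le_of_le_one_right (Real.exp_nonneg _) hK

theorem cw_shift (m a b : ℕ) :
    cw lam h (fun i => ω (m + i)) a b = cw lam h ω (m + a) (m + b) := by
  have hsum : ∑ i ∈ Icc (a + 1) b, ω (m + i) = ∑ i ∈ Icc (m + a + 1) (m + b), ω i := by
    rw [add_assoc, ← map_add_left_Icc, sum_map]
    rfl
  simp only [cw, hsum]
  push_cast
  ring_nf

theorem Zpart_mul_Zpart_shift_le (hKnn : ∀ n, 0 ≤ K n) (m n : ℕ) :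
    Zpart K lam h ω m * Zpart K lam h (fun i => ω (m + i)) n ≤ Zpart K lam h ω (m + n) := by
  induction n using Nat.strong_induction_on with
  | _ n ih =>
    rcases n with _ | n
    · simp [Zpart_zero]
    calc Zpart K lam h ω m * Zpart K lam h (fun i => ω (m + i)) (n + 1)
        = ∑ j ∈ range (n + 1), Zpart K lam h ω m * Zpart K lam h (fun i => ω (m + i)) j *
            K (m + (n + 1) - (m + j)) * cw lam h ω (m + j) (m + (n + 1)) := by
          rw [Zpart_succ, mul_sum]
          refine sum_congr rfl fun j _ => ?_
          rw [cw_shift, Nat.add_sub_add_left]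
          ring
      _ ≤ ∑ j ∈ range (n + 1), Zpart K lam h ω (m + j) * K (m + (n + 1) - (m + j)) *
            cw lam h ω (m + j) (m + (n + 1)) :=
          sum_le_sum fun j hj => by
            have := hKnn (m + (n + 1) - (m + j))
            have := cw_nonneg lam h ω (m + j) (m + (n + 1))
            gcongr
            exact ih j (mem_range.1 hj)
      _ ≤ ∑ j ∈ range (m + (n + 1)), Zpart K lam h ω j * K (m + (n + 1) - j) *
            cw lam h ω j (m + (n + 1)) := by
          rw [sum_range_add _ m (n + 1)]
          exact le_add_of_nonneg_left (sum_nonneg fun j _ => Zpart_mul_mul_cw_nonneg hKnn j _)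
      _ = Zpart K lam h ω (m + (n + 1)) := (Zpart_succ K lam h ω (m + n)).symm

theorem measurable_cw (lam h : ℝ) (a b : ℕ) : Measurable fun ω : ℕ → ℝ => cw lam h ω a b := by
  unfold cw
  fun_prop

theorem measurable_Zpart (K : ℕ → ℝ) (lam h : ℝ) (N : ℕ) :
    Measurable fun ω : ℕ → ℝ => Zpart K lam h ω N := by
  induction N using Nat.strong_induction_on with
  | _ N ih =>
    rcases N with _ | N
    · simp only [Zpart_zero]; exact measurable_const
    · simp only [Zpart_succ]
      exact Finset.measurable_sum _ fun j hj =>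
        ((ih j (mem_range.1 hj)).mul_const _).mul (measurable_cw lam h j (N + 1))

end PartitionFunction

theorem eventually_pos_of_tendsto_rpow_mul {u : ℕ → ℝ} {p C : ℝ} (hC : 0 < C)
    (hu : Tendsto (fun n : ℕ => (n : ℝ) ^ p * u n) atTop (𝓝 C)) : ∀ᶠ n in atTop, 0 < u n := by
  filter_upwards [hu.eventually (eventually_gt_nhds hC), eventually_gt_atTop 0] with n hn hn0
  exact pos_of_mul_pos_right hn (by positivity)

theorem tendsto_log_div_of_tendsto_rpow_mul {u : ℕ → ℝ} {p C : ℝ} (hC : 0 < C)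
    (hu : Tendsto (fun n : ℕ => (n : ℝ) ^ p * u n) atTop (𝓝 C)) :
    Tendsto (fun n : ℕ => Real.log (u n) / n) atTop (𝓝 0) := by
  have hlog : Tendsto (fun n : ℕ => Real.log ((n : ℝ) ^ p * u n) / n) atTop (𝓝 0) :=
    ((Real.continuousAt_log hC.ne').tendsto.comp hu).div_atTop tendsto_natCast_atTop_atTop
  have hlogn : Tendsto (fun n : ℕ => p * (Real.log n / n)) atTop (𝓝 0) := by
    simpa using (Real.isLittleO_log_id_atTop.tendsto_div_nhds_zero.comp
      tendsto_natCast_atTop_atTop).const_mul p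
  refine (sub_zero (0 : ℝ) ▸ hlog.sub hlogn).congr' ?_
  filter_upwards [eventually_pos_of_tendsto_rpow_mul hC hu, eventually_gt_atTop 0] with n hn hn0
  have hn0 : (0 : ℝ) < n := Nat.cast_pos.2 hn0
  rw [Real.log_mul (by positivity) hn.ne', Real.log_rpow hn0]
  ring

section Disorder

variable {μ : Measure ℝ} [IsProbabilityMeasure μ]

theorem IsGaussianDisorder.eq_infinitePi {P : Measure (ℕ → ℝ)} (hP : IsGaussianDisorder P) :
    P = Measure.infinitePi fun _ => gaussianReal 0 1 := by
  have := hP.1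
  have h := hP.2.1.map_fun_eq_infinitePi_map fun i => measurable_pi_apply i
  simpa only [hP.2.2, Measure.map_id'] using h

theorem measurePreserving_shift_infinitePi (m : ℕ) :
    MeasurePreserving (fun ω : ℕ → ℝ => fun i => ω (m + i))
      (Measure.infinitePi fun _ => μ) (Measure.infinitePi fun _ => μ) :=
  ⟨by fun_prop, Measure.map_infinitePi_infinitePi_of_inj (add_right_injective m)⟩

theorem integrable_comp_eval_infinitePi {g : ℝ → ℝ} (hg : Integrable g μ) (i : ℕ) :
    Integrable (fun ω : ℕ → ℝ => g (ω i)) (Measure.infinitePi fun _ => μ) :=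
  (measurePreserving_eval_infinitePi _ i).integrable_comp_of_integrable hg

theorem integral_comp_eval_infinitePi {g : ℝ → ℝ} (hg : AEStronglyMeasurable g μ) (i : ℕ) :
    ∫ ω, g (ω i) ∂(Measure.infinitePi fun _ => μ) = ∫ x, g x ∂μ := by
  have he := measurePreserving_eval_infinitePi (fun _ : ℕ => μ) i
  rw [← he.map_eq] at hg
  rw [← integral_map he.measurable.aemeasurable hg, he.map_eq]

theorem integral_comp_shift_infinitePi {f : (ℕ → ℝ) → ℝ}
    (hf : AEStronglyMeasurable f (Measure.infinitePi fun _ => μ)) (m : ℕ) :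
    ∫ ω, f (fun i => ω (m + i)) ∂(Measure.infinitePi fun _ => μ)
      = ∫ ω, f ω ∂(Measure.infinitePi fun _ => μ) := by
  have hθ := measurePreserving_shift_infinitePi (μ := μ) m
  rw [← hθ.map_eq] at hf
  rw [← integral_map hθ.measurable.aemeasurable hf, hθ.map_eq]

end Disorder

section FreeEnergy

variable {K : ℕ → ℝ} {lam h : ℝ} {μ : Measure ℝ} [IsProbabilityMeasure μ] {N : ℕ}

theorem log_half_le_log_Zpart (hKnn : ∀ n, 0 ≤ K n) (hN : N ≠ 0) (hKN : 0 < K N)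
    (ω : ℕ → ℝ) : Real.log (K N / 2) ≤ Real.log (Zpart K lam h ω N) :=
  Real.log_le_log (by positivity) (half_le_Zpart hKnn hN)

theorem log_Zpart_le_sum_energyBound (hKnn : ∀ n, 0 ≤ K n) (hKsum : HasSum K 1) (N : ℕ)
    (ω : ℕ → ℝ) :
    Real.log (Zpart K lam h ω N) ≤ ∑ i ∈ Icc 1 N, energyBound lam h (ω i) := by
  rcases (Zpart_nonneg hKnn N).eq_or_lt with hZ | hZ
  · rw [← hZ, Real.log_zero]
    exact sum_nonneg fun i _ => by unfold energyBound; positivity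
  · exact (Real.log_le_log hZ (Zpart_le_exp_sum_energyBound hKnn hKsum N)).trans_eq (Real.log_exp _)

theorem integrable_energyBound (hμ : Integrable id μ) :
    Integrable (energyBound lam h) μ :=
  ((integrable_const _).add hμ.abs).const_mul _

theorem integrable_sum_energyBound (hμ : Integrable id μ) (N : ℕ) :
    Integrable (fun ω : ℕ → ℝ => ∑ i ∈ Icc 1 N, energyBound lam h (ω i))
      (Measure.infinitePi fun _ => μ) :=
  integrable_finsetSum _ fun i _ => integrable_comp_eval_infinitePi (integrable_energyBound hμ) i

theorem integral_sum_energyBound (hμ : Integrable id μ) (N : ℕ) :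
    ∫ ω, ∑ i ∈ Icc 1 N, energyBound lam h (ω i) ∂(Measure.infinitePi fun _ => μ)
      = N * ∫ x, energyBound lam h x ∂μ := by
  rw [integral_finsetSum _ fun i _ => integrable_comp_eval_infinitePi (integrable_energyBound hμ) i]
  simp [integral_comp_eval_infinitePi (integrable_energyBound (lam := lam) (h := h) hμ).1]

theorem integrable_log_Zpart_of_le (hKnn : ∀ n, 0 ≤ K n) (hKsum : HasSum K 1)
    (hμ : Integrable id μ) {g : (ℕ → ℝ) → ℝ} (hg : Integrable g (Measure.infinitePi fun _ => μ))
    (hgZ : ∀ ω, g ω ≤ Real.log (Zpart K lam h ω N)) :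
    Integrable (fun ω => Real.log (Zpart K lam h ω N)) (Measure.infinitePi fun _ => μ) :=
  integrable_of_le_of_le
    (Real.measurable_log.comp (measurable_Zpart K lam h N)).aestronglyMeasurable
    (ae_of_all _ hgZ) (ae_of_all _ (log_Zpart_le_sum_energyBound hKnn hKsum N)) hg
    (integrable_sum_energyBound hμ N)

theorem integrable_log_Zpart (hKnn : ∀ n, 0 ≤ K n) (hKsum : HasSum K 1)
    (hμ : Integrable id μ) (hN : N ≠ 0) (hKN : 0 < K N) :
    Integrable (fun ω => Real.log (Zpart K lam h ω N)) (Measure.infinitePi fun _ => μ) :=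
  integrable_log_Zpart_of_le hKnn hKsum hμ (integrable_const _) (log_half_le_log_Zpart hKnn hN hKN)

theorem log_half_le_integral_log_Zpart (hKnn : ∀ n, 0 ≤ K n) (hKsum : HasSum K 1)
    (hμ : Integrable id μ) (hN : N ≠ 0) (hKN : 0 < K N) :
    Real.log (K N / 2) ≤ ∫ ω, Real.log (Zpart K lam h ω N) ∂(Measure.infinitePi fun _ => μ) := by
  simpa using integral_mono (integrable_const _) (integrable_log_Zpart hKnn hKsum hμ hN hKN)
    (log_half_le_log_Zpart hKnn hN hKN)

theorem integral_log_Zpart_le (hKnn : ∀ n, 0 ≤ K n) (hKsum : HasSum K 1)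
    (hμ : Integrable id μ) (hN : N ≠ 0) (hKN : 0 < K N) :
    ∫ ω, Real.log (Zpart K lam h ω N) ∂(Measure.infinitePi fun _ => μ)
      ≤ N * ∫ x, energyBound lam h x ∂μ :=
  (integral_mono (integrable_log_Zpart hKnn hKsum hμ hN hKN) (integrable_sum_energyBound hμ N)
    (log_Zpart_le_sum_energyBound hKnn hKsum N)).trans_eq (integral_sum_energyBound hμ N)

theorem integral_log_Zpart_add_le (hKnn : ∀ n, 0 ≤ K n) (hKsum : HasSum K 1)
    (hμ : Integrable id μ) {m n : ℕ} (hm : m ≠ 0) (hn : n ≠ 0) (hKm : 0 < K m) (hKn : 0 < K n) :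
    ∫ ω, Real.log (Zpart K lam h ω m) ∂(Measure.infinitePi fun _ => μ)
      + ∫ ω, Real.log (Zpart K lam h ω n) ∂(Measure.infinitePi fun _ => μ)
      ≤ ∫ ω, Real.log (Zpart K lam h ω (m + n)) ∂(Measure.infinitePi fun _ => μ) := by
  have hint_m := integrable_log_Zpart (lam := lam) (h := h) hKnn hKsum hμ hm hKm
  have hint_n := integrable_log_Zpart (lam := lam) (h := h) hKnn hKsum hμ hn hKn
  have hint_θ : Integrable (fun ω => Real.log (Zpart K lam h (fun i => ω (m + i)) n))
      (Measure.infinitePi fun _ => μ) :=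
    (measurePreserving_shift_infinitePi (μ := μ) m).integrable_comp_of_integrable hint_n
  have hlog : ∀ ω : ℕ → ℝ, Real.log (Zpart K lam h ω m)
      + Real.log (Zpart K lam h (fun i => ω (m + i)) n) ≤ Real.log (Zpart K lam h ω (m + n)) :=
    fun ω => by
      have hZm := Zpart_pos (lam := lam) (h := h) (ω := ω) hKnn hm hKm
      have hZn := Zpart_pos (lam := lam) (h := h) (ω := fun i => ω (m + i)) hKnn hn hKn
      rw [← Real.log_mul hZm.ne' hZn.ne']
      exact Real.log_le_log (mul_pos hZm hZn) (Zpart_mul_Zpart_shift_le hKnn m n)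
  rw [← integral_comp_shift_infinitePi hint_n.1 m, ← integral_add hint_m hint_θ]
  exact integral_mono (hint_m.add hint_θ)
    (integrable_log_Zpart_of_le hKnn hKsum hμ (hint_m.add hint_θ) hlog) hlog

theorem exists_tendsto_free_energy_infinitePi (hKnn : ∀ n, 0 ≤ K n) (hKsum : HasSum K 1)
    {p C : ℝ} (hC : 0 < C) (hTail : Tendsto (fun n : ℕ => (n : ℝ) ^ p * K n) atTop (𝓝 C))
    (hμ : Integrable id μ) :
    ∃ F : ℝ, 0 ≤ F ∧ Tendsto (fun N : ℕ => (N : ℝ)⁻¹ *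
      ∫ ω, Real.log (Zpart K lam h ω N) ∂(Measure.infinitePi fun _ => μ)) atTop (𝓝 F) := by
  obtain ⟨n₀, hn₀⟩ := eventually_atTop.1
    ((eventually_pos_of_tendsto_rpow_mul hC hTail).and (eventually_gt_atTop 0))
  set a : ℕ → ℝ := fun N => ∫ ω, Real.log (Zpart K lam h ω N) ∂(Measure.infinitePi fun _ => μ)
  have hsuper : ∀ m n, n₀ ≤ m → n₀ ≤ n → a m + a n ≤ a (m + n) := fun m n hm hn =>
    integral_log_Zpart_add_le hKnn hKsum hμ (hn₀ m hm).2.ne' (hn₀ n hn).2.ne' (hn₀ m hm).1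
      (hn₀ n hn).1
  have hbdd : BddAbove ((fun n => a n / n) '' Set.Ici n₀) := by
    refine ⟨∫ x, energyBound lam h x ∂μ, ?_⟩
    rintro _ ⟨n, hn, rfl⟩
    rw [div_le_iff₀ (Nat.cast_pos.2 (hn₀ n hn).2), mul_comm]
    exact integral_log_Zpart_le hKnn hKsum hμ (hn₀ n hn).2.ne' (hn₀ n hn).1
  have hlim := tendsto_div_sSup_of_superadditive (hn₀ n₀ le_rfl).2 hsuper hbdd
  have hlower : Tendsto (fun N : ℕ => Real.log (K N / 2) / N) atTop (𝓝 0) := by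
    refine (sub_zero (0 : ℝ) ▸ (tendsto_log_div_of_tendsto_rpow_mul hC hTail).sub
      (tendsto_const_div_atTop_nhds_zero_nat (Real.log 2))).congr' ?_
    filter_upwards [eventually_ge_atTop n₀] with N hN
    rw [Real.log_div (hn₀ N hN).1.ne' two_ne_zero, sub_div]
  refine ⟨_, le_of_tendsto_of_tendsto hlower hlim ?_, hlim.congr fun N => div_eq_inv_mul _ _⟩
  filter_upwards [eventually_ge_atTop n₀] with N hN
  exact div_le_div_of_nonneg_right
    (log_half_le_integral_log_Zpart hKnn hKsum hμ (hn₀ N hN).2.ne' (hn₀ N hN).1) N.cast_nonneg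

end FreeEnergy

theorem free_energy_exists_and_nonneg_general
    (K : ℕ → ℝ) (α CK : ℝ) (hCK : 0 < CK)
    (hKnn : ∀ n, 0 ≤ K n) (hKsum : HasSum K 1)
    (hTail : Tendsto (fun n : ℕ => (n : ℝ) ^ (1 + α) * K n) atTop (nhds CK))
    (P : Measure (ℕ → ℝ)) (hP : IsGaussianDisorder P)
    (lam h : ℝ) :
    ∃ F : ℝ, 0 ≤ F ∧
      Tendsto (fun N : ℕ => ((N : ℝ))⁻¹ * ∫ ω, Real.log (Zpart K lam h ω N) ∂P)
        atTop (nhds F) := by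
  rw [hP.eq_infinitePi]
  exact exists_tendsto_free_energy_infinitePi hKnn hKsum hCK hTail
    ((memLp_id_gaussianReal 1).integrable le_rfl)

/-- for every `λ ≥ 0` and `h ≥ 0` the limit
`F(λ,h) = lim_N (1/N) 𝔼 log Z_{N,ω}(λ,h)` exists and is nonnegative. -/
theorem free_energy_exists_and_nonneg
    (K : ℕ → ℝ) (α CK : ℝ) (hα : 0 < α) (hCK : 0 < CK)
    (hK0 : K 0 = 0) (hKnn : ∀ n, 0 ≤ K n) (hKsum : HasSum K 1)
    (hTail : Tendsto (fun n : ℕ => (n : ℝ) ^ (1 + α) * K n) atTop (nhds CK))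
    (P : Measure (ℕ → ℝ)) (hP : IsGaussianDisorder P)
    (lam h : ℝ) (hlam : 0 ≤ lam) (hh : 0 ≤ h) :
    ∃ F : ℝ, 0 ≤ F ∧
      Tendsto (fun N : ℕ => ((N : ℝ))⁻¹ * ∫ ω, Real.log (Zpart K lam h ω N) ∂P)
        atTop (nhds F) :=
  free_energy_exists_and_nonneg_general K α CK hCK hKnn hKsum hTail P hP lam h
end

section
/- Let ω = (ω_i)_{i≥1} be i.i.d. standard Gaussian random variables, let λ > 0 and 0 < γ < ρ < 1, set h = ρλ, and for a finite set I ⊂ ℕ define φ(I) = (1 + exp(−2λh|I| − 2λ Σ_{i∈I} ω_i))/2. Then 𝔼[φ(I)^γ] ≤ (1 + exp(2λ²γ(γ − ρ)|I|)) / 2^γ ≤ 2^{1−γ}. -/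
/-!
Subadditivity `(1 + y) ^ γ ≤ 1 + y ^ γ` for `0 ≤ γ ≤ 1` moves the fractional power inside the
exponential, turning `𝔼[φ(I)^γ]` into `(1 + e^{-2λ²ργ|I|} 𝔼[e^{-2λγ Σ_{i∈I} ω_i}]) / 2^γ`. The
Gaussian moment generating function gives `𝔼[e^{-2λγ Σ ω_i}] = e^{2λ²γ²|I|}`, and the resulting
exponent `2λ²γ(γ - ρ)|I|` is nonpositive because `γ < ρ`.
-/

open MeasureTheory ProbabilityTheory Filter Finset

open Real

lemma rpow_one_add_div_two_le {y γ : ℝ} (hy : 0 ≤ y) (hγ0 : 0 ≤ γ) (hγ1 : γ ≤ 1) :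
    ((1 + y) / 2) ^ γ ≤ (1 + y ^ γ) / 2 ^ γ := by
  rw [div_rpow (by positivity) zero_le_two]
  gcongr
  simpa using rpow_add_le_add_rpow zero_le_one hy hγ0 hγ1

lemma one_add_exp_div_rpow_two_le {x : ℝ} (hx : x ≤ 0) (γ : ℝ) :
    (1 + exp x) / 2 ^ γ ≤ 2 ^ (1 - γ) := by
  rw [rpow_sub zero_lt_two, rpow_one]
  gcongr
  linarith [exp_le_one_iff.mpr hx]

lemma integral_rpow_one_add_exp_div_two_le {Ω : Type*} [MeasurableSpace Ω] {μ : Measure Ω}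
    [IsProbabilityMeasure μ] {X : Ω → ℝ} {γ : ℝ} (hγ0 : 0 ≤ γ) (hγ1 : γ ≤ 1) (a b : ℝ)
    (hX : Integrable (fun ω => exp (-(γ * b) * X ω)) μ) :
    ∫ ω, ((1 + exp (a - b * X ω)) / 2) ^ γ ∂μ ≤ (1 + exp (γ * a) * mgf X μ (-(γ * b))) / 2 ^ γ := by
  have hpow : ∀ ω, exp (a - b * X ω) ^ γ = exp (γ * a) * exp (-(γ * b) * X ω) := fun ω => by
    rw [← exp_mul, ← exp_add]
    congr 1
    ring
  calc ∫ ω, ((1 + exp (a - b * X ω)) / 2) ^ γ ∂μ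
      ≤ ∫ ω, (1 + exp (γ * a) * exp (-(γ * b) * X ω)) / 2 ^ γ ∂μ := by
        refine integral_mono_of_nonneg (.of_forall fun ω => by positivity)
          (((integrable_const 1).add (hX.const_mul _)).div_const _) (.of_forall fun ω => ?_)
        simp only [← hpow]
        exact rpow_one_add_div_two_le (exp_pos _).le hγ0 hγ1
    _ = (1 + exp (γ * a) * mgf X μ (-(γ * b))) / 2 ^ γ := by
        rw [integral_div, integral_add (integrable_const 1) (hX.const_mul _), integral_const_mul,
          integral_const, probReal_univ, one_smul, mgf]

namespace IsGaussianDisorder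

variable {P : Measure (ℕ → ℝ)}

lemma mgf_sum (hP : IsGaussianDisorder P) (I : Finset ℕ) (t : ℝ) :
    mgf (fun ω => ∑ i ∈ I, ω i) P t = exp (I.card * t ^ 2 / 2) := by
  have hsum := hP.2.1.mgf_sum (fun i => measurable_pi_apply i) I (t := t)
  simp only [mgf_gaussianReal (hP.2.2 _), prod_const, NNReal.coe_one] at hsum
  rw [← exp_nat_mul] at hsum
  convert hsum using 2
  · ext ω
    simp
  · ring

lemma integrable_exp_mul_sum (hP : IsGaussianDisorder P) (I : Finset ℕ) (t : ℝ) :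
    Integrable (fun ω => exp (t * ∑ i ∈ I, ω i)) P := by
  have : IsProbabilityMeasure P := hP.1
  rw [← mgf_pos_iff, hP.mgf_sum]
  exact exp_pos _

end IsGaussianDisorder

theorem fractional_moment_of_phi_general
    (P : Measure (ℕ → ℝ)) (hP : IsGaussianDisorder P)
    (lam γ ρ : ℝ) (hγ0 : 0 < γ) (hγρ : γ < ρ) (hρ1 : ρ < 1)
    (I : Finset ℕ) :
    (∫ ω, ((1 + Real.exp (-(2 * lam * (ρ * lam) * (I.card : ℝ))
          - 2 * lam * ∑ i ∈ I, ω i)) / 2) ^ γ ∂P) ≤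
        (1 + Real.exp (2 * lam ^ 2 * γ * (γ - ρ) * (I.card : ℝ))) / 2 ^ γ ∧
      (1 + Real.exp (2 * lam ^ 2 * γ * (γ - ρ) * (I.card : ℝ))) / 2 ^ γ ≤
        2 ^ (1 - γ) := by
  have : IsProbabilityMeasure P := hP.1
  refine ⟨?_, one_add_exp_div_rpow_two_le ?_ γ⟩
  · convert integral_rpow_one_add_exp_div_two_le hγ0.le (hγρ.trans hρ1).le _ (2 * lam)
      (hP.integrable_exp_mul_sum I _) using 3
    rw [hP.mgf_sum, ← exp_add]
    ring_nf
  · have hcoef : 2 * lam ^ 2 * γ * (γ - ρ) ≤ 0 :=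
      mul_nonpos_of_nonneg_of_nonpos (by positivity) (by linarith)
    exact mul_nonpos_of_nonpos_of_nonneg hcoef I.card.cast_nonneg

/-- for `λ > 0`, `0 < γ < ρ < 1`, `h = ρλ` and a finite `I ⊂ ℕ`, the
fractional moment of `φ(I) = (1+exp(-2λh|I| - 2λ Σ_{i∈I} ω_i))/2` under the IID standard
Gaussian law satisfies
`𝔼[φ(I)^γ] ≤ (1+exp(2λ²γ(γ-ρ)|I|))/2^γ ≤ 2^{1-γ}`. -/
theorem fractional_moment_of_phi
    (P : Measure (ℕ → ℝ)) (hP : IsGaussianDisorder P)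
    (lam γ ρ : ℝ) (hlam : 0 < lam) (hγ0 : 0 < γ) (hγρ : γ < ρ) (hρ1 : ρ < 1)
    (I : Finset ℕ) :
    (∫ ω, ((1 + Real.exp (-(2 * lam * (ρ * lam) * (I.card : ℝ))
          - 2 * lam * ∑ i ∈ I, ω i)) / 2) ^ γ ∂P) ≤
        (1 + Real.exp (2 * lam ^ 2 * γ * (γ - ρ) * (I.card : ℝ))) / 2 ^ γ ∧
      (1 + Real.exp (2 * lam ^ 2 * γ * (γ - ρ) * (I.card : ℝ))) / 2 ^ γ ≤
        2 ^ (1 - γ) :=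
  fractional_moment_of_phi_general P hP lam γ ρ hγ0 hγρ hρ1 I
end
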